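/- arXiv:2009.00316 — 2 statements merged into one kernel-verified Lean document; each statement's English description precedes it below -/
import Mathlib

section
/- For every p ∈ (1,2) and all real numbers a, b ≥ 0 one has the pointwise inequality a^p − b^p − p·b^{p−1}·(a − b) ≤ 3p·(a^p + b^p − a·b^{p−1} − b·a^{p−1}). -/
/-- Convexity gradient inequality: for `p > 1` and `a, b ≥ 0`,
`a^p - b^p ≤ p * a^(p-1) * (a - b)`. -/
lemma rpow_grad_ineq {p : ℝ} (hp : 1 < p) {a b : ℝ} (ha : 0 ≤ a) (hb : 0 ≤ b) :
    a ^ p - b ^ p ≤ p * a ^ (p - 1) * (a - b) := by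
  rcases eq_or_lt_of_le ha with rfl | ha'
  · rw [Real.zero_rpow (by linarith), Real.zero_rpow (by linarith : p - 1 ≠ 0)]
    have := Real.rpow_nonneg hb p
    nlinarith
  · have hs : -1 ≤ b / a - 1 := by
      have : 0 ≤ b / a := div_nonneg hb ha'.le
      linarith
    have hB := one_add_mul_self_le_rpow_one_add hs hp.le
    have h1 : 1 + (b / a - 1) = b / a := by ring
    rw [h1] at hB
    -- hB : 1 + p * (b/a - 1) ≤ (b/a)^p
    have hdiv : (b / a) ^ p = b ^ p / a ^ p := Real.div_rpow hb ha'.le p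
    rw [hdiv] at hB
    have hap : 0 < a ^ p := Real.rpow_pos_of_pos ha' p
    have key : a ^ p * (1 + p * (b / a - 1)) ≤ b ^ p := by
      calc a ^ p * (1 + p * (b / a - 1)) ≤ a ^ p * (b ^ p / a ^ p) := by
            exact mul_le_mul_of_nonneg_left hB hap.le
        _ = b ^ p := by field_simp
    have hsplit : a ^ p = a ^ (p - 1) * a := by
      nth_rewrite 1 [show p = (p - 1) + 1 by ring]
      rw [Real.rpow_add ha', Real.rpow_one]
    have ha0 : a ≠ 0 := ha'.ne'
    have expand : a ^ p * (1 + p * (b / a - 1)) = a ^ p + p * a ^ (p - 1) * (b - a) := by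
      rw [hsplit]
      field_simp
    rw [expand] at key
    linarith

/-- For every `p ∈ (1,2)` and all reals `a, b ≥ 0` one has the pointwise inequality
`a^p − b^p − p·b^{p−1}·(a − b) ≤ 3p·(a^p + b^p − a·b^{p−1} − b·a^{p−1})`,
where powers are real powers (with `0^s = 0` for `s > 0`). -/
theorem pointwise_power_inequality (p : ℝ) (hp : p ∈ Set.Ioo (1 : ℝ) 2)
    (a b : ℝ) (ha : 0 ≤ a) (hb : 0 ≤ b) :
    a ^ p - b ^ p - p * b ^ (p - 1) * (a - b) ≤
      3 * p * (a ^ p + b ^ p - a * b ^ (p - 1) - b * a ^ (p - 1)) := by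
  obtain ⟨hp1, hp2⟩ := hp
  have hsplit : ∀ x : ℝ, 0 ≤ x → x ^ p = x ^ (p - 1) * x := by
    intro x hx
    rcases eq_or_lt_of_le hx with rfl | hx'
    · rw [Real.zero_rpow (by linarith), Real.zero_rpow (by linarith : p - 1 ≠ 0), mul_zero]
    · nth_rewrite 1 [show p = (p - 1) + 1 by ring]
      rw [Real.rpow_add hx', Real.rpow_one]
  have hX : a ^ p + b ^ p - a * b ^ (p - 1) - b * a ^ (p - 1)
      = (a - b) * (a ^ (p - 1) - b ^ (p - 1)) := by
    rw [hsplit a ha, hsplit b hb]; ring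
  have hXnn : 0 ≤ (a - b) * (a ^ (p - 1) - b ^ (p - 1)) := by
    rcases le_total a b with h | h
    · have := Real.rpow_le_rpow ha h (by linarith : 0 ≤ p - 1)
      nlinarith
    · exact mul_nonneg (by linarith)
        (by have := Real.rpow_le_rpow hb h (by linarith : 0 ≤ p - 1); linarith)
  have hgrad := rpow_grad_ineq hp1 ha hb
  -- LHS ≤ p * (a-b) * (a^(p-1) - b^(p-1)) = p * X ≤ 3p * X
  have hL : a ^ p - b ^ p - p * b ^ (p - 1) * (a - b)
      ≤ p * ((a - b) * (a ^ (p - 1) - b ^ (p - 1))) := by nlinarith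
  have hR : p * ((a - b) * (a ^ (p - 1) - b ^ (p - 1)))
      ≤ 3 * p * ((a - b) * (a ^ (p - 1) - b ^ (p - 1))) := by nlinarith
  rw [hX]
  linarith
end

section
/- The function p ↦ κ_p := (1/2)(1 − (1 − 1/p)^{p/2})^{−1} is strictly increasing on (1, ∞). -/
/-!
Put `u = 1 - 1/p ∈ (0, 1)`. Then `p * log (1 - 1/p) = - log u / (1 - u)` is minus the slope of the
secant of the strictly concave `log` through `1` and `u`; that slope decreases as `u` increases,
so `(1 - 1/p) ^ (p / 2) = exp ((p / 2) * log (1 - 1/p))` increases strictly with `p`, staying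
below `1`, and hence so does `κ_p`.
-/

open Real Set

lemma one_sub_one_div_mem_Ioo {p : ℝ} (hp : 1 < p) : 1 - 1 / p ∈ Ioo 0 1 := by
  have : 1 / p ∈ Ioo 0 1 := ⟨by positivity, (div_lt_one (by linarith)).2 hp⟩
  constructor <;> linarith [this.1, this.2]

lemma strictMonoOn_mul_log_one_sub_one_div :
    StrictMonoOn (fun p : ℝ => p * log (1 - 1 / p)) (Ioi 1) := by
  intro p hp q hq hpq
  have hu := one_sub_one_div_mem_Ioo hp
  have hv := one_sub_one_div_mem_Ioo hq
  have huv : 1 - 1 / p < 1 - 1 / q :=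
    sub_lt_sub_left (one_div_lt_one_div_of_lt (zero_lt_one.trans hp) hpq) 1
  have hsecant := strictConcaveOn_log_Ioi.secant_strict_mono (a := 1) (mem_Ioi.2 one_pos) hu.1 hv.1
    hu.2.ne hv.2.ne huv
  have hslope (r : ℝ) : (log (1 - 1 / r) - log 1) / (1 - 1 / r - 1) = -(r * log (1 - 1 / r)) := by
    rw [log_one, sub_zero, sub_sub_cancel_left, div_neg, one_div, div_inv_eq_mul, mul_comm]
  rw [hslope p, hslope q] at hsecant
  exact neg_lt_neg_iff.1 hsecant

lemma strictMonoOn_one_sub_one_div_rpow_div {c : ℝ} (hc : 0 < c) :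
    StrictMonoOn (fun p : ℝ => (1 - 1 / p) ^ (p / c)) (Ioi 1) := by
  intro p hp q hq hpq
  dsimp only
  rw [rpow_def_of_pos (one_sub_one_div_mem_Ioo hp).1,
    rpow_def_of_pos (one_sub_one_div_mem_Ioo hq).1, exp_lt_exp, mul_div_assoc', mul_comm,
    mul_div_assoc', mul_comm (log _)]
  exact div_lt_div_of_pos_right (strictMonoOn_mul_log_one_sub_one_div hp hq hpq) hc

/-- The function `p ↦ κ_p = (1/2)(1 − (1 − 1/p)^{p/2})⁻¹` is strictly increasing on `(1,∞)`. -/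
theorem kappa_strictMonoOn :
    StrictMonoOn (fun p : ℝ => (1 / 2) * (1 - (1 - 1 / p) ^ (p / 2))⁻¹) (Set.Ioi 1) := by
  intro p hp q hq hpq
  have hlt_one : (1 - 1 / q) ^ (q / 2) < 1 := rpow_lt_one (one_sub_one_div_mem_Ioo hq).1.le
    (one_sub_one_div_mem_Ioo hq).2 (by linarith [mem_Ioi.1 hq])
  have hmono := strictMonoOn_one_sub_one_div_rpow_div two_pos hp hq hpq
  have hinv : (1 - (1 - 1 / p) ^ (p / 2))⁻¹ < (1 - (1 - 1 / q) ^ (q / 2))⁻¹ :=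
    inv_strictAnti₀ (sub_pos.2 hlt_one) (sub_lt_sub_left hmono 1)
  dsimp only
  linarith
end
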